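/- Let t ≤ b be odd with b ≥ 5, let v_1, v_2 ∈ F_2^t with wt(v_1) = wt(v_2), let y ∈ F_2^{n−t}, and let i_1 < i_2 with i_2 − i_1 ≥ b^4·log n. Suppose x = I(y, v_1, i_1) lies in Bal(n,b) and satisfies Σ i·x_i ≡ a (mod bn + b^2). Then z = I(y, v_2, i_2) satisfies Σ_{i=1}^n i·z_i − Σ_{i=1}^n i·x_i ≢ 0 (mod bn + b^2); hence z does not satisfy the same VT congruence. -/

import Mathlib

/-- The VT syndrome Σ_{i=1}^m i·x_i of a binary word, over the integers. -/
def listSynd (x : List Bool) : ℤ :=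
  ∑ i ∈ Finset.range x.length, ((i : ℤ) + 1) * (if x.getD i false then 1 else 0)

/-- `insertAt y v j` inserts the block `v` into `y` at (0-indexed) position `j`. -/
def insertAt (y v : List Bool) (j : ℕ) : List Bool :=
  y.take j ++ v ++ y.drop j

/-- Membership in the balanced set Bal(n,b). -/
def memBal (n b : ℕ) (x : List Bool) : Prop :=
  x.length = n ∧
  ∀ B j : ℕ, B ≤ n → ((b : ℝ) ^ 4 * Real.logb 2 n ≤ (B : ℝ)) → j + B ≤ n →
    ((B : ℝ) / 2 - (B : ℝ) / (3 * b) < (((x.drop j).take B).count true : ℝ) ∧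
     (((x.drop j).take B).count true : ℝ) < (B : ℝ) / 2 + (B : ℝ) / (3 * b))

/-!
Write `x = p ++ (v₁ ++ u) ++ s` and `z = p ++ (u ++ v₂) ++ s`, where `u` is the stretch of `y`
between the two insertion points, of length `B`. Then
`listSynd z - listSynd x = B·w - t·wt(u) + δ = L·w - t·W + δ` with `w = wt(v₁) = wt(v₂)`,
`δ = listSynd v₂ - listSynd v₁`, and `L = t + B`, `W = wt(v₁ ++ u)` the length and weight of a
window of `x`. Since `t` is odd, `|2w - t| ≥ 1`, and balance gives `|W - L/2| < L/(3b)`; hence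
`|L·w - t·W| > L/6 > b² > |δ|`, so the difference is nonzero. On the other hand it lies strictly
between `-(bn + b²)` and `bn + b²`, so it is not divisible by `bn + b²`.
-/

namespace List

theorem count_true_eq_sum_getD (l : List Bool) :
    (l.count true : ℤ) = ∑ i ∈ Finset.range l.length, (if l.getD i false then 1 else 0) := by
  induction l with
  | nil => simp
  | cons c l ih =>
    rw [length_cons, Finset.sum_range_succ']
    simp only [getD_cons_succ, getD_cons_zero, ← ih, count_cons]
    cases c <;> simp

end List

theorem listSynd_cons (c : Bool) (l : List Bool) :
    listSynd (c :: l) = (if c then 1 else 0) + l.count true + listSynd l := by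
  simp only [listSynd, List.length_cons, Finset.sum_range_succ', List.getD_cons_succ,
    List.getD_cons_zero, List.count_true_eq_sum_getD, Nat.cast_add, Nat.cast_one, add_mul,
    one_mul, Finset.sum_add_distrib]
  ring

theorem listSynd_append (a c : List Bool) :
    listSynd (a ++ c) = listSynd a + a.length * c.count true + listSynd c := by
  induction a with
  | nil => simp [listSynd]
  | cons x a ih =>
    rw [List.cons_append, listSynd_cons, ih, listSynd_cons, List.count_append, List.length_cons]
    push_cast
    ring

theorem count_true_le_listSynd (l : List Bool) : (l.count true : ℤ) ≤ listSynd l := by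
  rw [List.count_true_eq_sum_getD]
  refine Finset.sum_le_sum fun i _ => ?_
  split_ifs <;> omega

theorem listSynd_le_length_mul_count (l : List Bool) :
    listSynd l ≤ l.length * l.count true := by
  rw [List.count_true_eq_sum_getD, Finset.mul_sum]
  refine Finset.sum_le_sum fun i hi => ?_
  have : i < l.length := Finset.mem_range.mp hi
  split_ifs <;> omega

theorem abs_listSynd_sub_lt_sq {v₁ v₂ : List Bool} (hl : v₁.length = v₂.length)
    (hc : v₁.count true = v₂.count true) (hpos : 0 < v₁.length) :
    |listSynd v₂ - listSynd v₁| < v₁.length ^ 2 := by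
  have h₁ := count_true_le_listSynd v₁
  have h₂ := count_true_le_listSynd v₂
  have h₁' := listSynd_le_length_mul_count v₁
  have h₂' := listSynd_le_length_mul_count v₂
  have hw : (v₁.count true : ℤ) ≤ v₁.length := by exact_mod_cast List.count_le_length
  rw [← hl, ← hc] at h₂'
  rw [← hc] at h₂
  rw [abs_sub_lt_iff]
  constructor <;> nlinarith

theorem listSynd_swap_sub (p u s v₁ v₂ : List Bool) (hl : v₁.length = v₂.length)
    (hc : v₁.count true = v₂.count true) :
    listSynd (p ++ (u ++ v₂) ++ s) - listSynd (p ++ (v₁ ++ u) ++ s)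
      = u.length * v₂.count true - v₁.length * u.count true + (listSynd v₂ - listSynd v₁) := by
  simp only [listSynd_append, List.count_append, List.length_append, hl, hc, Nat.cast_add]
  ring

theorem insertAt_eq_of_le {y : List Bool} (v : List Bool) {i j : ℕ} (h : i ≤ j) :
    insertAt y v i = y.take i ++ (v ++ (y.drop i).take (j - i)) ++ y.drop j := by
  conv_lhs => rw [insertAt, ← List.take_append_drop (j - i) (y.drop i)]
  rw [List.drop_drop, Nat.add_sub_cancel' h]
  simp

theorem insertAt_eq_of_ge {y : List Bool} (v : List Bool) {i j : ℕ} (h : i ≤ j) :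
    insertAt y v j = y.take i ++ ((y.drop i).take (j - i) ++ v) ++ y.drop j := by
  rw [insertAt, ← Nat.add_sub_cancel' h, List.take_add, Nat.add_sub_cancel' h]
  simp

theorem memBal.abs_count_sub_half_lt {n b : ℕ} {p m s : List Bool}
    (h : memBal n b (p ++ m ++ s)) (hL : (b : ℝ) ^ 4 * Real.logb 2 n ≤ m.length) :
    |(m.count true : ℝ) - m.length / 2| < m.length / (3 * b) := by
  obtain ⟨hlen, hbal⟩ := h
  simp only [List.length_append] at hlen
  have hwin := hbal m.length p.length (by omega) hL (by omega)
  simp only [List.append_assoc, List.drop_left, List.take_left] at hwin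
  exact abs_sub_lt_iff.mpr ⟨by linarith, by linarith⟩

theorem le_of_mul_logb_le {c x : ℝ} {n : ℕ} (hc : 0 ≤ c) (hn : 2 ≤ n)
    (h : c * Real.logb 2 n ≤ x) : c ≤ x := by
  have hlog : 1 ≤ Real.logb 2 n := by
    rw [Real.le_logb_iff_rpow_le one_lt_two (by positivity)]
    exact_mod_cast hn
  nlinarith

theorem lt_abs_mul_sub_mul {b t L w W : ℝ} (hb : 0 < b) (ht₀ : 0 ≤ t) (htb : t ≤ b)
    (hw : 1 ≤ |2 * w - t|) (hW : |W - L / 2| < L / (3 * b)) :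
    L / 6 < |L * w - t * W| := by
  have hbW : b * |W - L / 2| < L / 3 := by
    rw [lt_div_iff₀ (by positivity)] at hW
    linarith
  have hL : 0 < L := by nlinarith [abs_nonneg (W - L / 2)]
  have htW : |t * (W - L / 2)| < L / 3 := by
    rw [abs_mul, abs_of_nonneg ht₀]
    nlinarith [abs_nonneg (W - L / 2)]
  have hLw : L / 2 ≤ |L / 2 * (2 * w - t)| := by
    rw [abs_mul, abs_of_pos (half_pos hL)]
    nlinarith
  calc L / 6 < |L / 2 * (2 * w - t)| - |t * (W - L / 2)| := by linarith
    _ ≤ |L / 2 * (2 * w - t) - t * (W - L / 2)| := abs_sub_abs_le_abs_sub _ _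
    _ = |L * w - t * W| := by congr 1; ring

theorem mul_sub_mul_add_ne_zero {b t L w W : ℕ} {δ : ℤ} (hb : 3 ≤ b) (ht : t ≤ b)
    (htodd : Odd t) (hL : b ^ 4 ≤ L) (hW : |(W : ℝ) - L / 2| < L / (3 * b))
    (hδ : |δ| < b ^ 2) :
    (L * w : ℤ) - t * W + δ ≠ 0 := by
  have hodd : 2 * (w : ℤ) - t ≠ 0 := by obtain ⟨k, rfl⟩ := htodd; omega
  have hw : (1 : ℝ) ≤ |2 * (w : ℝ) - t| := by exact_mod_cast Int.one_le_abs hodd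
  have hmain := lt_abs_mul_sub_mul (by positivity) (Nat.cast_nonneg t) (by exact_mod_cast ht) hw hW
  have hbL : 6 * (b : ℝ) ^ 2 ≤ L := by
    have : 6 * b ^ 2 ≤ b ^ 4 :=
      calc 6 * b ^ 2 ≤ b ^ 2 * b ^ 2 := Nat.mul_le_mul_right _ (by nlinarith)
        _ = b ^ 4 := by ring
    exact_mod_cast this.trans hL
  have hδ' : |(δ : ℝ)| < b ^ 2 := by exact_mod_cast hδ
  intro h
  have : (L * w - t * W : ℝ) = -δ := by exact_mod_cast (by linarith : (L * w : ℤ) - t * W = -δ)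
  rw [this, abs_neg] at hmain
  linarith

theorem abs_mul_sub_mul_add_lt {n b B w t w₂ : ℕ} {δ : ℤ} (hB : B ≤ n) (hw : w ≤ b)
    (ht : t ≤ b) (hw₂ : w₂ ≤ n) (hδ : |δ| < b ^ 2) :
    |(B * w : ℤ) - t * w₂ + δ| < b * n + b ^ 2 := by
  have h₁ : B * w ≤ n * b := Nat.mul_le_mul hB hw
  have h₂ : t * w₂ ≤ b * n := Nat.mul_le_mul ht hw₂
  rw [abs_lt] at hδ ⊢
  constructor <;> nlinarith [Nat.zero_le (B * w), Nat.zero_le (t * w₂)]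

theorem burst_VT_syndromes_differ_general (n b t : ℕ) (hb : 5 ≤ b) (ht : t ≤ b)
    (htodd : Odd t)
    (v₁ v₂ y : List Bool) (hv₁ : v₁.length = t) (hv₂ : v₂.length = t)
    (hw : v₁.count true = v₂.count true)
    (i₁ i₂ : ℕ) (h₁₂ : i₁ < i₂) (h₂ : i₂ ≤ y.length)
    (hgap : (b : ℝ) ^ 4 * Real.logb 2 n ≤ ((i₂ : ℝ) - i₁))
    (hxBal : memBal n b (insertAt y v₁ i₁)) :
    ¬ listSynd (insertAt y v₂ i₂) ≡ listSynd (insertAt y v₁ i₁)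
        [ZMOD ((b : ℤ) * n + (b : ℤ) ^ 2)] := by
  intro hcon
  have ht₀ : 0 < t := htodd.pos
  have hn : n = y.length + t := by
    rw [← hxBal.1, insertAt]
    simp only [List.length_append, List.length_take, List.length_drop, hv₁]
    omega
  have hu : ((y.drop i₁).take (i₂ - i₁)).length = i₂ - i₁ := by
    simp only [List.length_take, List.length_drop]; omega
  rw [insertAt_eq_of_le v₁ h₁₂.le] at hxBal hcon
  rw [insertAt_eq_of_ge v₂ h₁₂.le] at hcon
  generalize (y.drop i₁).take (i₂ - i₁) = u at hu hxBal hcon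
  have hgapL : (b : ℝ) ^ 4 * Real.logb 2 n ≤ (v₁ ++ u).length := by
    simp only [List.length_append, hv₁, hu, Nat.cast_add, Nat.cast_sub h₁₂.le] at hgap ⊢
    linarith [Nat.cast_nonneg (α := ℝ) t]
  have hbL : b ^ 4 ≤ (v₁ ++ u).length := by
    exact_mod_cast le_of_mul_logb_le (by positivity) (by omega) hgapL
  have hδ : |listSynd v₂ - listSynd v₁| < b ^ 2 :=
    (abs_listSynd_sub_lt_sq (hv₁.trans hv₂.symm) hw (by omega)).trans_le (by rw [hv₁]; gcongr)
  have hdvd := hcon.symm.dvd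
  rw [listSynd_swap_sub _ _ _ _ _ (hv₁.trans hv₂.symm) hw, hv₁] at hdvd
  refine mul_sub_mul_add_ne_zero (w := v₂.count true) (by omega) ht htodd hbL
    (hxBal.abs_count_sub_half_lt hgapL) hδ ?_
  rw [← Int.eq_zero_of_abs_lt_dvd hdvd (abs_mul_sub_mul_add_lt (by omega) ?_ ht ?_ hδ)]
  · simp only [List.length_append, List.count_append, hv₁, hw]; push_cast; ring
  · exact hw ▸ (List.count_le_length.trans_eq hv₁).trans ht
  · exact List.count_le_length.trans (by omega)

theorem burst_VT_syndromes_differ (n b t : ℕ) (hb : 5 ≤ b) (ht : t ≤ b)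
    (htodd : Odd t) (a : ℤ)
    (v₁ v₂ y : List Bool) (hv₁ : v₁.length = t) (hv₂ : v₂.length = t)
    (hw : v₁.count true = v₂.count true) (hy : y.length = n - t)
    (i₁ i₂ : ℕ) (h₁₂ : i₁ < i₂) (h₂ : i₂ ≤ y.length)
    (hgap : (b : ℝ) ^ 4 * Real.logb 2 n ≤ ((i₂ : ℝ) - i₁))
    (hxBal : memBal n b (insertAt y v₁ i₁))
    (hxVT : listSynd (insertAt y v₁ i₁) ≡ a [ZMOD ((b : ℤ) * n + (b : ℤ) ^ 2)]) :
    ¬ listSynd (insertAt y v₂ i₂) ≡ listSynd (insertAt y v₁ i₁)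
        [ZMOD ((b : ℤ) * n + (b : ℤ) ^ 2)] :=
  burst_VT_syndromes_differ_general n b t hb ht htodd v₁ v₂ y hv₁ hv₂ hw i₁ i₂ h₁₂ h₂ hgap hxBal
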